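/- arXiv:1704.00353 — 2 statements merged into one kernel-verified Lean document; each statement's English description precedes it below -/
import Mathlib

section
/- Let γ: [a,b] → U be a curve in an open set U ⊆ ℝ^{d+1} that is Lipschitz and causal for a continuous Lorentzian metric g on U admitting a C^0 time function x^0 (i.e. the coordinate function x^0 has past-directed timelike gradient with |∇x^0|_g ≥ m > 0 on U). Then the g-length of γ satisfies L_g(γ) ≤ (√2/m)(x^0(γ(b)) − x^0(γ(a))). In particular, by shrinking U, the g-length of every causal curve contained in U can be made smaller than any prescribed ε > 0. -/
/-!
The signature `(-,+,…,+)` yields the reverse Cauchy–Schwarz inequality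
`g(w,v)² ≥ g(v,v) g(w,w)` for every timelike `w`: a positive definite hyperplane `T^⊥` meets any
plane on which `g` is negative definite, so `g` is nonnegative on `w^⊥`. For `w = ∇x⁰` and the
velocity `v = γ'` of a future causal curve, `g(w,v) = (x⁰ ∘ γ)' > 0`, whence
`m √(-g(γ',γ')) ≤ (x⁰ ∘ γ)'` almost everywhere. Integrating with the fundamental theorem of calculus
for the absolutely continuous function `x⁰ ∘ γ` gives `L(γ) ≤ (x⁰(γ b) - x⁰(γ a)) / m`, which is
sharper than the bound with `√2 / m`. On the slab `|x⁰ - x⁰(p)| < m ε / 2` every length is then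
below `ε`.
-/

open MeasureTheory Set Filter

noncomputable section

/-- The value of the (matrix-valued) metric field `g` at `x`, as a quadratic form on `v`. -/
def quadForm {n : ℕ} (g : (Fin n → ℝ) → Matrix (Fin n) (Fin n) ℝ)
    (x v : Fin n → ℝ) : ℝ :=
  ∑ μ, ∑ ν, g x μ ν * v μ * v ν

/-- The metric `g` at `x`, as a bilinear form on `v, w`. -/
def bilinForm {n : ℕ} (g : (Fin n → ℝ) → Matrix (Fin n) (Fin n) ℝ)
    (x v w : Fin n → ℝ) : ℝ :=
  ∑ μ, ∑ ν, g x μ ν * v μ * w ν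

/-- The components of `g` are continuous on `U`. -/
def ContinuousMetricOn {n : ℕ} (g : (Fin n → ℝ) → Matrix (Fin n) (Fin n) ℝ)
    (U : Set (Fin n → ℝ)) : Prop :=
  ∀ μ ν, ContinuousOn (fun x => g x μ ν) U

/-- `g` is a symmetric Lorentzian metric of signature `(-,+,…,+)` on `U`:
at each point there is a timelike vector whose `g`-orthogonal complement is
positive definite. -/
def IsLorentzOn {n : ℕ} (g : (Fin n → ℝ) → Matrix (Fin n) (Fin n) ℝ)
    (U : Set (Fin n → ℝ)) : Prop :=
  ∀ x ∈ U, (∀ μ ν, g x μ ν = g x ν μ) ∧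
    ∃ T : Fin n → ℝ, quadForm g x T < 0 ∧
      ∀ v : Fin n → ℝ, v ≠ 0 → bilinForm g x T v = 0 → 0 < quadForm g x v

/-- `T` is a continuous timelike vector field on `U` (a time orientation). -/
def TimeOrientationOn {n : ℕ} (g : (Fin n → ℝ) → Matrix (Fin n) (Fin n) ℝ)
    (T : (Fin n → ℝ) → Fin n → ℝ) (U : Set (Fin n → ℝ)) : Prop :=
  (∀ i, ContinuousOn (fun x => T x i) U) ∧ ∀ x ∈ U, quadForm g x (T x) < 0

/-- Lorentzian length of the curve `γ` on `[a,b]`. -/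
def clen {n : ℕ} (g : (Fin n → ℝ) → Matrix (Fin n) (Fin n) ℝ)
    (γ : ℝ → Fin n → ℝ) (a b : ℝ) : ℝ :=
  ∫ t in a..b, Real.sqrt (-(quadForm g (γ t) (deriv γ t)))

/-- `γ : [a,b] → ℝⁿ` is a future directed causal Lipschitz curve for `g`, the
time orientation being given by the (future directed) timelike field `T`. -/
def FutureCausalOn {n : ℕ} (g : (Fin n → ℝ) → Matrix (Fin n) (Fin n) ℝ)
    (T : (Fin n → ℝ) → Fin n → ℝ) (γ : ℝ → Fin n → ℝ) (a b : ℝ) : Prop :=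
  (∃ K, LipschitzOnWith K γ (Icc a b)) ∧
  ∀ᵐ t : ℝ, t ∈ Ioo a b →
    quadForm g (γ t) (deriv γ t) ≤ 0 ∧ deriv γ t ≠ 0 ∧
      bilinForm g (γ t) (T (γ t)) (deriv γ t) < 0

/-- `γ : [a,b] → ℝⁿ` is a future directed timelike Lipschitz curve for `g`. -/
def FutureTimelikeOn {n : ℕ} (g : (Fin n → ℝ) → Matrix (Fin n) (Fin n) ℝ)
    (T : (Fin n → ℝ) → Fin n → ℝ) (γ : ℝ → Fin n → ℝ) (a b : ℝ) : Prop :=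
  (∃ K, LipschitzOnWith K γ (Icc a b)) ∧
  ∀ᵐ t : ℝ, t ∈ Ioo a b →
    quadForm g (γ t) (deriv γ t) < 0 ∧
      bilinForm g (γ t) (T (γ t)) (deriv γ t) < 0

/-- The causal relation on the subset `M`: `q` is in the causal future of `p`. -/
def CausalRel {n : ℕ} (g : (Fin n → ℝ) → Matrix (Fin n) (Fin n) ℝ)
    (T : (Fin n → ℝ) → Fin n → ℝ) (M : Set (Fin n → ℝ)) (p q : Fin n → ℝ) : Prop :=
  p = q ∨ ∃ γ a b, a < b ∧ FutureCausalOn g T γ a b ∧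
    MapsTo γ (Icc a b) M ∧ γ a = p ∧ γ b = q

/-- The chronological relation on the subset `M`. -/
def ChronRel {n : ℕ} (g : (Fin n → ℝ) → Matrix (Fin n) (Fin n) ℝ)
    (T : (Fin n → ℝ) → Fin n → ℝ) (M : Set (Fin n → ℝ)) (p q : Fin n → ℝ) : Prop :=
  ∃ γ a b, a < b ∧ FutureTimelikeOn g T γ a b ∧
    MapsTo γ (Icc a b) M ∧ γ a = p ∧ γ b = q

/-- The causal future `J⁺(p, M)`. -/
def JPlus {n : ℕ} (g : (Fin n → ℝ) → Matrix (Fin n) (Fin n) ℝ)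
    (T : (Fin n → ℝ) → Fin n → ℝ) (M : Set (Fin n → ℝ)) (p : Fin n → ℝ) :
    Set (Fin n → ℝ) :=
  {q | CausalRel g T M p q}

/-- The causal past `J⁻(q, M)`. -/
def JMinus {n : ℕ} (g : (Fin n → ℝ) → Matrix (Fin n) (Fin n) ℝ)
    (T : (Fin n → ℝ) → Fin n → ℝ) (M : Set (Fin n → ℝ)) (q : Fin n → ℝ) :
    Set (Fin n → ℝ) :=
  {p | CausalRel g T M p q}

/-- The chronological future `I⁺(p, M)`. -/
def IPlus {n : ℕ} (g : (Fin n → ℝ) → Matrix (Fin n) (Fin n) ℝ)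
    (T : (Fin n → ℝ) → Fin n → ℝ) (M : Set (Fin n → ℝ)) (p : Fin n → ℝ) :
    Set (Fin n → ℝ) :=
  {q | ChronRel g T M p q}

/-- The chronological past `I⁻(q, M)`. -/
def IMinus {n : ℕ} (g : (Fin n → ℝ) → Matrix (Fin n) (Fin n) ℝ)
    (T : (Fin n → ℝ) → Fin n → ℝ) (M : Set (Fin n → ℝ)) (q : Fin n → ℝ) :
    Set (Fin n → ℝ) :=
  {p | ChronRel g T M p q}

/-- `W` is causally convex in `M`: no causal curve of `M` meets `W` in a
disconnected set. -/
def CausallyConvex {n : ℕ} (g : (Fin n → ℝ) → Matrix (Fin n) (Fin n) ℝ)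
    (T : (Fin n → ℝ) → Fin n → ℝ) (M W : Set (Fin n → ℝ)) : Prop :=
  ∀ γ a b, a ≤ b → FutureCausalOn g T γ a b → MapsTo γ (Icc a b) M →
    γ a ∈ W → γ b ∈ W → MapsTo γ (Icc a b) W

/-- Strong causality of `(M, g)`. -/
def StronglyCausalOn {n : ℕ} (g : (Fin n → ℝ) → Matrix (Fin n) (Fin n) ℝ)
    (T : (Fin n → ℝ) → Fin n → ℝ) (M : Set (Fin n → ℝ)) : Prop :=
  ∀ p ∈ M, ∀ U, IsOpen U → p ∈ U → U ⊆ M →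
    ∃ W, IsOpen W ∧ p ∈ W ∧ W ⊆ U ∧ CausallyConvex g T M W

/-- Global hyperbolicity: strong causality plus compact causal diamonds. -/
def GloballyHyperbolicOn {n : ℕ} (g : (Fin n → ℝ) → Matrix (Fin n) (Fin n) ℝ)
    (T : (Fin n → ℝ) → Fin n → ℝ) (M : Set (Fin n → ℝ)) : Prop :=
  StronglyCausalOn g T M ∧
    ∀ p ∈ M, ∀ q ∈ M, IsCompact (JPlus g T M p ∩ JMinus g T M q)

namespace LinearMap.BilinForm

variable {E : Type*} [AddCommGroup E] [Module ℝ E] {B : LinearMap.BilinForm ℝ E} {T w : E}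

lemma apply_self_nonneg_of_apply_eq_zero (hB : B.IsSymm)
    (hTpos : ∀ v, v ≠ 0 → B T v = 0 → 0 < B v v) (hw : B w w < 0) {u : E}
    (hu : B w u = 0) : 0 ≤ B u u := by
  by_contra! hneg
  -- `z` lies in `T^⊥` and in the plane spanned by `u` and `w`, on which `B` is negative definite.
  set z := B T w • u - B T u • w
  have hTz : B T z = 0 := by simp only [z, map_sub, map_smul, smul_eq_mul]; ring
  have hzz : B z z = B T w ^ 2 * B u u + B T u ^ 2 * B w w := by
    simp only [z, map_sub, map_smul, LinearMap.sub_apply, LinearMap.smul_apply, smul_eq_mul,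
      hu, hB.eq u w]
    ring
  by_cases hz : z = 0
  · have hTw : B T w = 0 := by
      simp only [hz, map_zero] at hzz
      have : B T w ^ 2 * B u u = 0 := by
        nlinarith [mul_nonneg (sq_nonneg (B T w)) (neg_nonneg.mpr hneg.le),
          mul_nonneg (sq_nonneg (B T u)) (neg_nonneg.mpr hw.le)]
      simpa [hneg.ne] using this
    have hw0 : w ≠ 0 := by rintro rfl; simp at hw
    exact (hTpos w hw0 hTw).not_gt hw
  · have := hTpos z hz hTz
    nlinarith [sq_nonneg (B T w), sq_nonneg (B T u)]

lemma apply_self_mul_apply_self_le_sq (hB : B.IsSymm)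
    (hTpos : ∀ v, v ≠ 0 → B T v = 0 → 0 < B v v) (hw : B w w < 0) (v : E) :
    B v v * B w w ≤ B w v ^ 2 := by
  set c := B w v / B w w
  have hc : c * B w w = B w v := div_mul_cancel₀ _ hw.ne
  have hu : B w (v - c • w) = 0 := by simp only [map_sub, map_smul, smul_eq_mul]; linarith
  have := apply_self_nonneg_of_apply_eq_zero hB hTpos hw hu
  simp only [map_sub, map_smul, LinearMap.sub_apply, LinearMap.smul_apply, smul_eq_mul,
    hB.eq v w] at this
  nlinarith

lemma sqrt_neg_apply_self_mul_le_abs (hB : B.IsSymm)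
    (hTpos : ∀ v, v ≠ 0 → B T v = 0 → 0 < B v v) (hw : B w w < 0) (v : E) :
    √(-B v v) * √(-B w w) ≤ |B w v| := by
  rw [← Real.sqrt_mul' _ (neg_nonneg.mpr hw.le), ← Real.sqrt_sq_eq_abs]
  exact Real.sqrt_le_sqrt (by nlinarith [apply_self_mul_apply_self_le_sq hB hTpos hw v])

end LinearMap.BilinForm

section Metric

variable {n : ℕ} {g : (Fin n → ℝ) → Matrix (Fin n) (Fin n) ℝ} {x : Fin n → ℝ}

lemma bilinForm_eq_toBilin' (v u : Fin n → ℝ) :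
    bilinForm g x v u = (g x).toBilin' v u := by
  simp only [bilinForm, Matrix.toBilin'_apply, mul_comm (g x _ _)]

lemma quadForm_eq_toBilin' (v : Fin n → ℝ) : quadForm g x v = (g x).toBilin' v v :=
  bilinForm_eq_toBilin' v v

lemma mul_sqrt_neg_quadForm_le_bilinForm {U : Set (Fin n → ℝ)} (hLor : IsLorentzOn g U)
    (hx : x ∈ U) {w v : Fin n → ℝ} (hw : quadForm g x w < 0) {m : ℝ}
    (hmw : m ≤ √(-quadForm g x w)) (hv : bilinForm g x (-w) v < 0) :
    m * √(-quadForm g x v) ≤ bilinForm g x w v := by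
  obtain ⟨hsymm, T, -, hTpos⟩ := hLor x hx
  have hB : (g x).toBilin'.IsSymm :=
    Matrix.isSymm_toBilin'_iff_isSymm.mpr (Matrix.IsSymm.ext fun μ ν => hsymm ν μ)
  simp only [quadForm_eq_toBilin', bilinForm_eq_toBilin'] at hTpos hw hmw hv ⊢
  simp only [map_neg, LinearMap.neg_apply, neg_lt_zero] at hv
  calc m * √(-(g x).toBilin' v v) ≤ √(-(g x).toBilin' v v) * √(-(g x).toBilin' w w) := by
        rw [mul_comm]; gcongr
    _ ≤ |(g x).toBilin' w v| :=
        LinearMap.BilinForm.sqrt_neg_apply_self_mul_le_abs hB hTpos hw v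
    _ = (g x).toBilin' w v := abs_of_pos hv

end Metric

theorem integral_le_sub_of_ae_le_deriv {f φ : ℝ → ℝ} {a b : ℝ} (hab : a ≤ b)
    (hf : AbsolutelyContinuousOnInterval f a b) (hφ : ∀ t, 0 ≤ φ t)
    (hle : ∀ᵐ t, t ∈ Ioo a b → φ t ≤ deriv f t) :
    ∫ t in a..b, φ t ≤ f b - f a := by
  rw [← hf.integral_deriv_eq_sub, intervalIntegral.integral_of_le hab,
    intervalIntegral.integral_of_le hab]
  refine integral_mono_of_nonneg (ae_of_all _ hφ) hf.intervalIntegrable_deriv.1 ?_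
  rw [Measure.restrict_congr_set Ioo_ae_eq_Ioc.symm]
  exact (ae_restrict_iff' measurableSet_Ioo).2 hle

lemma clen_nonneg {n : ℕ} (g : (Fin n → ℝ) → Matrix (Fin n) (Fin n) ℝ) (γ : ℝ → Fin n → ℝ)
    {a b : ℝ} (hab : a ≤ b) : 0 ≤ clen g γ a b :=
  intervalIntegral.integral_nonneg hab fun _ _ => Real.sqrt_nonneg _

theorem clen_le_div_of_futureCausalOn {n : ℕ} {U : Set (Fin n → ℝ)}
    {g : (Fin n → ℝ) → Matrix (Fin n) (Fin n) ℝ} (hLor : IsLorentzOn g U)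
    {w : (Fin n → ℝ) → Fin n → ℝ} (i : Fin n)
    (hgrad : ∀ x ∈ U, ∀ v : Fin n → ℝ, bilinForm g x (w x) v = v i)
    (hpast : ∀ x ∈ U, quadForm g x (w x) < 0) {m : ℝ} (hm : 0 < m)
    (hmlow : ∀ x ∈ U, m ≤ √(-quadForm g x (w x)))
    {γ : ℝ → Fin n → ℝ} {a b : ℝ} (hab : a ≤ b) (hmap : MapsTo γ (Icc a b) U)
    (hcaus : FutureCausalOn g (fun x => -(w x)) γ a b) :
    clen g γ a b ≤ (γ b i - γ a i) / m := by
  obtain ⟨⟨K, hK⟩, hae⟩ := hcaus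
  have hlip : LipschitzOnWith K (fun t => γ t i) (uIcc a b) := by
    have := (LipschitzWith.eval (α := fun _ : Fin n => ℝ) i).comp_lipschitzOnWith hK
    rwa [one_mul, ← uIcc_of_le hab] at this
  have hpt : ∀ᵐ t, t ∈ Ioo a b →
      m * √(-quadForm g (γ t) (deriv γ t)) ≤ deriv (fun s => γ s i) t := by
    filter_upwards [hae] with t ht hmem
    obtain ⟨-, hne, hfut⟩ := ht hmem
    have hx := hmap (Ioo_subset_Icc_self hmem)
    rw [(hasDerivAt_pi.1 (differentiableAt_of_deriv_ne_zero hne).hasDerivAt i).deriv,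
      ← hgrad _ hx (deriv γ t)]
    exact mul_sqrt_neg_quadForm_le_bilinForm hLor hx (hpast _ hx) (hmlow _ hx) hfut
  have := integral_le_sub_of_ae_le_deriv hab hlip.absolutelyContinuousOnInterval
    (fun _ => by positivity) hpt
  rw [intervalIntegral.integral_const_mul] at this
  rw [le_div_iff₀ hm, clen]
  linarith

theorem stmt0_general (d : ℕ) (U : Set (Fin (d + 1) → ℝ)) (hU : IsOpen U)
    (g : (Fin (d + 1) → ℝ) → Matrix (Fin (d + 1)) (Fin (d + 1)) ℝ)
    (hLor : IsLorentzOn g U)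
    (w : (Fin (d + 1) → ℝ) → Fin (d + 1) → ℝ)
    (hgrad : ∀ x ∈ U, ∀ v : Fin (d + 1) → ℝ, bilinForm g x (w x) v = v 0)
    (hpast : ∀ x ∈ U, quadForm g x (w x) < 0)
    (m : ℝ) (hm : 0 < m)
    (hmlow : ∀ x ∈ U, m ≤ Real.sqrt (-(quadForm g x (w x)))) :
    (∀ (γ : ℝ → Fin (d + 1) → ℝ) (a b : ℝ), a ≤ b →
        MapsTo γ (Icc a b) U → FutureCausalOn g (fun x => -(w x)) γ a b →
        clen g γ a b ≤ (Real.sqrt 2 / m) * (γ b 0 - γ a 0)) ∧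
    (∀ ε > (0 : ℝ), ∀ p ∈ U, ∃ U', U' ⊆ U ∧ IsOpen U' ∧ p ∈ U' ∧
        ∀ (γ : ℝ → Fin (d + 1) → ℝ) (a b : ℝ), a ≤ b →
          MapsTo γ (Icc a b) U' → FutureCausalOn g (fun x => -(w x)) γ a b →
          clen g γ a b < ε) := by
  have hlen : ∀ γ a b, a ≤ b → MapsTo γ (Icc a b) U →
      FutureCausalOn g (fun x => -(w x)) γ a b → clen g γ a b ≤ (γ b 0 - γ a 0) / m :=
    fun γ a b hab hmap hcaus =>
      clen_le_div_of_futureCausalOn hLor 0 hgrad hpast hm hmlow hab hmap hcaus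
  refine ⟨fun γ a b hab hmap hcaus => ?_, fun ε hε p hp => ?_⟩
  · have hle := hlen γ a b hab hmap hcaus
    have hΔ : 0 ≤ γ b 0 - γ a 0 := by
      simpa using (le_div_iff₀ hm).1 ((clen_nonneg g γ hab).trans hle)
    calc clen g γ a b ≤ (γ b 0 - γ a 0) / m := hle
      _ = (1 / m) * (γ b 0 - γ a 0) := by ring
      _ ≤ (Real.sqrt 2 / m) * (γ b 0 - γ a 0) := by
        gcongr
        exact Real.one_le_sqrt.mpr (by norm_num)
  · refine ⟨U ∩ {x | |x 0 - p 0| < m * ε / 2}, inter_subset_left,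
      hU.inter (isOpen_lt (by fun_prop) continuous_const),
      ⟨hp, show |p 0 - p 0| < m * ε / 2 by rw [sub_self, abs_zero]; positivity⟩,
      fun γ a b hab hmap hcaus => ?_⟩
    have ha : |γ a 0 - p 0| < m * ε / 2 := (hmap (left_mem_Icc.mpr hab)).2
    have hb : |γ b 0 - p 0| < m * ε / 2 := (hmap (right_mem_Icc.mpr hab)).2
    rw [abs_lt] at ha hb
    calc clen g γ a b ≤ (γ b 0 - γ a 0) / m := hlen γ a b hab (fun t ht => (hmap ht).1) hcaus
      _ < (m * ε) / m := by gcongr; linarith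
      _ = ε := by field_simp

/-- length estimate via a time function `x⁰` with past timelike
gradient `w` of `g`-norm at least `m`, for causal curves in `U ⊆ ℝ^{d+1}`;
and, in particular, after shrinking `U` the length of any causal curve can be
made smaller than any prescribed `ε`. The time orientation is given by `-w`. -/
theorem stmt0 (d : ℕ) (U : Set (Fin (d + 1) → ℝ)) (hU : IsOpen U)
    (g : (Fin (d + 1) → ℝ) → Matrix (Fin (d + 1)) (Fin (d + 1)) ℝ)
    (hgc : ContinuousMetricOn g U) (hLor : IsLorentzOn g U)
    (w : (Fin (d + 1) → ℝ) → Fin (d + 1) → ℝ)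
    (hgrad : ∀ x ∈ U, ∀ v : Fin (d + 1) → ℝ, bilinForm g x (w x) v = v 0)
    (hpast : ∀ x ∈ U, quadForm g x (w x) < 0)
    (m : ℝ) (hm : 0 < m)
    (hmlow : ∀ x ∈ U, m ≤ Real.sqrt (-(quadForm g x (w x)))) :
    (∀ (γ : ℝ → Fin (d + 1) → ℝ) (a b : ℝ), a ≤ b →
        MapsTo γ (Icc a b) U → FutureCausalOn g (fun x => -(w x)) γ a b →
        clen g γ a b ≤ (Real.sqrt 2 / m) * (γ b 0 - γ a 0)) ∧
    (∀ ε > (0 : ℝ), ∀ p ∈ U, ∃ U', U' ⊆ U ∧ IsOpen U' ∧ p ∈ U' ∧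
        ∀ (γ : ℝ → Fin (d + 1) → ℝ) (a b : ℝ), a ≤ b →
          MapsTo γ (Icc a b) U' → FutureCausalOn g (fun x => -(w x)) γ a b →
          clen g γ a b < ε) :=
  stmt0_general d U hU g hLor w hgrad hpast m hm hmlow
end
end

section
/- Let g and g_ε be continuous Lorentzian metrics on a set V such that |g(X,X) − g_ε(X,X)| < ε for all h-unit vectors X, where h is a Riemannian metric. If σ is a curve in V, parameterized by h-arc length, that is causal for both g and g_ε and has h-length at most C, then |L_g(σ) − L_{g_ε}(σ)| < C√ε. -/
open MeasureTheory Set Filter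

noncomputable section

/-! Since `|√a - √b| ≤ √|a - b|` (also with the convention `√x = 0` for `x < 0`), the closeness
of `g` and `gε` on the `h`-unit tangent vector `σ'` gives
`|√(-g(σ', σ')) - √(-gε(σ', σ'))| < √ε` almost everywhere on `[0, S]`. Integrating, the lengths
differ by less than `S √ε ≤ C √ε`, strictly because the pointwise bound is strict on a set of
positive measure. -/

theorem Real.sqrt_add_le_sqrt_add_sqrt (x : ℝ) {y : ℝ} (hy : 0 ≤ y) : √(x + y) ≤ √x + √y := by
  rcases le_total 0 x with hx | hx
  · rw [Real.sqrt_le_left (by positivity)]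
    nlinarith [Real.sq_sqrt hx, Real.sq_sqrt hy, Real.sqrt_nonneg x, Real.sqrt_nonneg y]
  · rw [Real.sqrt_eq_zero'.2 hx, zero_add]
    exact Real.sqrt_le_sqrt (by linarith)

theorem Real.abs_sqrt_sub_sqrt_le_sqrt_abs_sub (a b : ℝ) : |√a - √b| ≤ √|a - b| := by
  wlog hba : b ≤ a generalizing a b
  · rw [abs_sub_comm, abs_sub_comm a]
    exact this b a (le_of_not_ge hba)
  rw [abs_of_nonneg (sub_nonneg.2 (Real.sqrt_le_sqrt hba)), abs_of_nonneg (sub_nonneg.2 hba)]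
  have := Real.sqrt_add_le_sqrt_add_sqrt b (sub_nonneg.2 hba)
  rw [add_sub_cancel] at this
  linarith

theorem Real.abs_sqrt_neg_sub_sqrt_neg_lt {p q ε : ℝ} (h : |p - q| < ε) :
    |√(-p) - √(-q)| < √ε :=
  calc |√(-p) - √(-q)| ≤ √|-p - -q| := Real.abs_sqrt_sub_sqrt_le_sqrt_abs_sub _ _
    _ = √|p - q| := by rw [neg_sub_neg, abs_sub_comm]
    _ < √ε := Real.sqrt_lt_sqrt (abs_nonneg _) h

/- If `f - g` is integrable, `f` and `g` are integrable together or not at all, and in the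
second case both integrals are the junk value `0`. -/
theorem intervalIntegral.norm_integral_sub_integral_le {E : Type*} [NormedAddCommGroup E]
    [NormedSpace ℝ E] {μ : Measure ℝ} {f g : ℝ → E} {a b : ℝ}
    (hfg : IntervalIntegrable (fun t => f t - g t) μ a b) :
    ‖(∫ t in a..b, f t ∂μ) - ∫ t in a..b, g t ∂μ‖ ≤ ‖∫ t in a..b, f t - g t ∂μ‖ := by
  by_cases hf : IntervalIntegrable f μ a b
  · have hg : IntervalIntegrable g μ a b := by simpa using hf.sub hfg
    rw [intervalIntegral.integral_sub hf hg]
  · have hg : ¬IntervalIntegrable g μ a b := fun hg => hf (by simpa using hfg.add hg)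
    simp [intervalIntegral.integral_undef hf, intervalIntegral.integral_undef hg]

theorem intervalIntegral.abs_integral_lt_of_ae_abs_lt {φ : ℝ → ℝ} {a b c : ℝ} (hab : a < b)
    (hφ : IntervalIntegrable φ volume a b) (hbound : ∀ᵐ t ∂volume.restrict (Ioc a b), |φ t| < c) :
    |∫ t in a..b, φ t| < (b - a) * c := by
  have hpos : volume.restrict (Ioc a b) {t | |φ t| < c} ≠ 0 := by
    have : (ae (volume.restrict (Ioc a b))).NeBot := by
      rw [ae_neBot, Ne, Measure.restrict_eq_zero, Real.volume_Ioc]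
      simpa using hab
    exact frequently_ae_iff.1 hbound.frequently
  calc |∫ t in a..b, φ t| ≤ ∫ t in a..b, |φ t| := intervalIntegral.abs_integral_le_integral_abs hab.le
    _ < ∫ _ in a..b, c :=
      intervalIntegral.integral_lt_integral_of_ae_le_of_measure_setOfPred_lt_ne_zero hab.le
        hφ.abs intervalIntegrable_const (hbound.mono fun _ ht => ht.le) hpos
    _ = (b - a) * c := by simp

theorem intervalIntegral.abs_integral_sub_integral_lt_of_ae_abs_sub_lt {f g : ℝ → ℝ} {a b c : ℝ}
    (hab : a < b) (hf : AEStronglyMeasurable f (volume.restrict (Ioc a b)))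
    (hg : AEStronglyMeasurable g (volume.restrict (Ioc a b)))
    (hfg : ∀ᵐ t, t ∈ Ioo a b → |f t - g t| < c) :
    |(∫ t in a..b, f t) - ∫ t in a..b, g t| < (b - a) * c := by
  have hbound : ∀ᵐ t ∂volume.restrict (Ioc a b), |f t - g t| < c := by
    rwa [← Measure.restrict_congr_set Ioo_ae_eq_Ioc, ae_restrict_iff' measurableSet_Ioo]
  have hint : IntervalIntegrable (fun t => f t - g t) volume a b :=
    (intervalIntegrable_iff_integrableOn_Ioc_of_le hab.le).2 <|
      Integrable.of_bound (hf.sub hg) c (hbound.mono fun _ ht => ht.le)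
  exact (intervalIntegral.norm_integral_sub_integral_le hint).trans_lt
    (intervalIntegral.abs_integral_lt_of_ae_abs_lt hab hint hbound)

theorem ContinuousMetricOn.aestronglyMeasurable_quadForm_deriv {n : ℕ}
    {G : (Fin n → ℝ) → Matrix (Fin n) (Fin n) ℝ} {V : Set (Fin n → ℝ)}
    (hG : ContinuousMetricOn G V) {γ : ℝ → Fin n → ℝ} {s : Set ℝ} (hs : MeasurableSet s)
    (hγ : ContinuousOn γ s) (hγV : MapsTo γ s V) :
    AEStronglyMeasurable (fun t => quadForm G (γ t) (deriv γ t)) (volume.restrict s) := by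
  have hγ' : ∀ i, AEStronglyMeasurable (fun t => deriv γ t i) (volume.restrict s) := fun i =>
    ((measurable_pi_apply i).comp (measurable_deriv γ)).aestronglyMeasurable
  refine Finset.aestronglyMeasurable_fun_sum _ fun i _ =>
    Finset.aestronglyMeasurable_fun_sum _ fun j _ => ?_
  exact ((((hG i j).comp hγ hγV).aestronglyMeasurable hs).mul (hγ' i)).mul (hγ' j)

theorem stmt2_general (n : ℕ) (V : Set (Fin n → ℝ))
    (g gε h : (Fin n → ℝ) → Matrix (Fin n) (Fin n) ℝ)
    (hgc : ContinuousMetricOn g V) (hgεc : ContinuousMetricOn gε V)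
    (ε : ℝ) (hε : 0 < ε)
    (hclose : ∀ x ∈ V, ∀ X : Fin n → ℝ, quadForm h x X = 1 →
      |quadForm g x X - quadForm gε x X| < ε)
    (C : ℝ) (hC : 0 < C)
    (σ : ℝ → Fin n → ℝ) (S : ℝ) (hS0 : 0 ≤ S) (hSC : S ≤ C)
    (hmaps : MapsTo σ (Icc 0 S) V)
    (hLip : ∃ K, LipschitzOnWith K σ (Icc 0 S))
    -- parameterized by `h`-arc length:
    (harc : ∀ᵐ t : ℝ, t ∈ Ioo 0 S → quadForm h (σ t) (deriv σ t) = 1) :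
    |clen g σ 0 S - clen gε σ 0 S| < C * Real.sqrt ε := by
  rcases hS0.eq_or_lt with rfl | hS
  · simpa [clen] using mul_pos hC (Real.sqrt_pos.2 hε)
  obtain ⟨K, hK⟩ := hLip
  have hσ : ContinuousOn σ (Ioc 0 S) := hK.continuousOn.mono Ioc_subset_Icc_self
  have hlen : ∀ G, ContinuousMetricOn G V → AEStronglyMeasurable
      (fun t => √(-quadForm G (σ t) (deriv σ t))) (volume.restrict (Ioc 0 S)) := fun G hG =>
    Real.continuous_sqrt.comp_aestronglyMeasurable
      (hG.aestronglyMeasurable_quadForm_deriv measurableSet_Ioc hσ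
        (hmaps.mono_left Ioc_subset_Icc_self)).neg
  have hpointwise : ∀ᵐ t, t ∈ Ioo 0 S →
      |√(-quadForm g (σ t) (deriv σ t)) - √(-quadForm gε (σ t) (deriv σ t))| < √ε := by
    filter_upwards [harc] with t ht hts
    exact Real.abs_sqrt_neg_sub_sqrt_neg_lt
      (hclose _ (hmaps (Ioo_subset_Icc_self hts)) _ (ht hts))
  calc |clen g σ 0 S - clen gε σ 0 S| < (S - 0) * √ε :=
        intervalIntegral.abs_integral_sub_integral_lt_of_ae_abs_sub_lt hS (hlen g hgc)
          (hlen gε hgεc) hpointwise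
    _ ≤ C * √ε := by rw [sub_zero]; gcongr

/-- if two continuous Lorentzian metrics `g`, `gε` differ by less
than `ε` on `h`-unit vectors, then for any curve `σ` in `V`, parameterized by
`h`-arc length, causal for both metrics and of `h`-length `S ≤ C`, the lengths
satisfy `|L_g(σ) − L_{gε}(σ)| < C√ε`. -/
theorem stmt2 (n : ℕ) (V : Set (Fin n → ℝ))
    (g gε h : (Fin n → ℝ) → Matrix (Fin n) (Fin n) ℝ)
    (hgc : ContinuousMetricOn g V) (hgεc : ContinuousMetricOn gε V)
    (hLor : IsLorentzOn g V) (hLorε : IsLorentzOn gε V)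
    (hhc : ContinuousMetricOn h V)
    (hhpos : ∀ x ∈ V, ∀ v : Fin n → ℝ, v ≠ 0 → 0 < quadForm h x v)
    (ε : ℝ) (hε : 0 < ε)
    (hclose : ∀ x ∈ V, ∀ X : Fin n → ℝ, quadForm h x X = 1 →
      |quadForm g x X - quadForm gε x X| < ε)
    (C : ℝ) (hC : 0 < C)
    (σ : ℝ → Fin n → ℝ) (S : ℝ) (hS0 : 0 ≤ S) (hSC : S ≤ C)
    (hmaps : MapsTo σ (Icc 0 S) V)
    (hLip : ∃ K, LipschitzOnWith K σ (Icc 0 S))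
    -- parameterized by `h`-arc length:
    (harc : ∀ᵐ t : ℝ, t ∈ Ioo 0 S → quadForm h (σ t) (deriv σ t) = 1)
    -- causal for both metrics:
    (hcg : ∀ᵐ t : ℝ, t ∈ Ioo 0 S → quadForm g (σ t) (deriv σ t) ≤ 0)
    (hcgε : ∀ᵐ t : ℝ, t ∈ Ioo 0 S → quadForm gε (σ t) (deriv σ t) ≤ 0) :
    |clen g σ 0 S - clen gε σ 0 S| < C * Real.sqrt ε :=
  stmt2_general n V g gε h hgc hgεc ε hε hclose C hC σ S hS0 hSC hmaps hLip harc
end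
end
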